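/- Let the transition rates of L take values in {0,1} off the diagonal and suppose the underlying graph G = (X,E) is an unweighted d-regular (R)-Ricci-flat graph. Then the function F : [0,∞) → [0,∞), F(r) = (d/2)·ν_{2,5}(−r/d), is a CD-function and L satisfies CD_Υ(2,F). -/

import Mathlib

open Real Filter MeasureTheory Set

/-- `Υ(r) = e^r - r - 1`. -/
noncomputable def Ups (r : ℝ) : ℝ := Real.exp r - r - 1

/-- `M₁(x) = ∑_{y ≠ x} k(x,y)`. -/
noncomputable def M1fn {X : Type*} (k : X → X → ℝ) (x : X) : ℝ :=
  ∑' y : {y : X // y ≠ x}, k x y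

/-- The Markov generator `L f(x) = ∑_y k(x,y)(f(y) - f(x))`. -/
noncomputable def genOp {X : Type*} (k : X → X → ℝ) (f : X → ℝ) (x : X) : ℝ :=
  ∑' y, k x y * (f y - f x)

/-- `Ψ_Υ(f)(x) = ∑_y k(x,y) Υ(f(y) - f(x))`. -/
noncomputable def psiUps {X : Type*} (k : X → X → ℝ) (f : X → ℝ) (x : X) : ℝ :=
  ∑' y, k x y * Ups (f y - f x)

/-- `B_{Υ'}(f,g)(x) = ∑_y k(x,y) Υ'(f(y)-f(x)) (g(y)-g(x))`. -/
noncomputable def bUps {X : Type*} (k : X → X → ℝ) (f g : X → ℝ) (x : X) : ℝ :=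
  ∑' y, k x y * (Real.exp (f y - f x) - 1) * (g y - g x)

/-- `Ψ_{2,Υ}(f) = (1/2)(L Ψ_Υ(f) - B_{Υ'}(f, L f))`. -/
noncomputable def psi2Ups {X : Type*} (k : X → X → ℝ) (f : X → ℝ) (x : X) : ℝ :=
  (1/2) * (genOp k (psiUps k f) x - bUps k f (genOp k f) x)

/-- Boundedness of a real-valued function on the state space. -/
def BddFun {X : Type*} (f : X → ℝ) : Prop := ∃ B : ℝ, ∀ x, |f x| ≤ B

/-- The standing assumptions on the transition rates: nonnegative off-diagonal rates,
`M₁(x) < ∞` (summability), `k(x,x) = -M₁(x)`, and `M₂(x) < ∞`. -/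
def KernelSetting {X : Type*} (k : X → X → ℝ) : Prop :=
  (∀ x y, x ≠ y → 0 ≤ k x y) ∧
  (∀ x : X, Summable fun y : {y : X // y ≠ x} => k x y) ∧
  (∀ x : X, k x x = -M1fn k x) ∧
  (∀ x : X, Summable fun y : {y : X // y ≠ x} => k x y * M1fn k y)

/-- A CD-function: continuous and nonnegative on `[0,∞)` with `F(0) = 0`, `F(r)/r`
strictly increasing on `(0,∞)` and `1/F` integrable at `∞`. -/
def IsCDFunction (F : ℝ → ℝ) : Prop :=
  ContinuousOn F (Ici 0) ∧ F 0 = 0 ∧ (∀ r : ℝ, 0 ≤ r → 0 ≤ F r) ∧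
  StrictMonoOn (fun r => F r / r) (Ioi 0) ∧
  ∃ c : ℝ, 0 < c ∧ IntegrableOn (fun r => 1 / F r) (Ioi c)

/-- The trivial extension `F₀` of `F : [0,∞) → [0,∞)` by `0` on `(-∞,0)`. -/
noncomputable def trivExt (F : ℝ → ℝ) : ℝ → ℝ := fun r => if 0 ≤ r then F r else 0

/-- The condition `CD_Υ(κ,F)` at a point `x`. -/
def CDUpsAt {X : Type*} (k : X → X → ℝ) (κ : ℝ) (F : ℝ → ℝ) (x : X) : Prop :=
  ∀ f : X → ℝ, BddFun f →
    κ * psiUps k f x + trivExt F (-genOp k f x) ≤ psi2Ups k f x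

/-- The condition `CD_Υ(κ,F)` (at every point). -/
def CDUps {X : Type*} (k : X → X → ℝ) (κ : ℝ) (F : ℝ → ℝ) : Prop :=
  ∀ x : X, CDUpsAt k κ F x

/-- `ν_{c,d}(r) = c Υ'(r) r + Υ(-r) - d Υ(r)`. -/
noncomputable def nuFn (c d r : ℝ) : ℝ :=
  c * (Real.exp r - 1) * r + Ups (-r) - d * Ups r

/-!
At a vertex `x` with neighbours `nᵢ = ηᵢ(x)`, put `aᵢ = f(nᵢ) - f(x)` and
`w_{ij} = f(ηᵢ(nⱼ)) - f(x)`. Regularity turns every sum over neighbours into a sum over `Fin d`,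
and `2 Ψ_{2,Υ}(f)(x)` becomes the double sum of
`T_{ij} = Υ(w_{ij} - aⱼ) - Υ(aᵢ) - Υ'(aⱼ)(w_{ij} - aⱼ - aᵢ)`.
Condition (iii) makes the row and column sums of `w` agree, so the
correction `E_{ij} = (e^{aᵢ} - e^{aⱼ})(w_{ij} - aⱼ - aᵢ)` has zero double sum, while
`T_{ij} - E_{ij} ≥ 0` is the tangent-line inequality for the convex function `Υ`.
Keeping only the diagonal, where `w_{ii} = 0` by (iv), gives
`2 Ψ_{2,Υ}(f) ≥ ∑ᵢ ν_{2,1}(aᵢ) = 4 Ψ_Υ(f) + ∑ᵢ ν_{2,5}(aᵢ)`, and Jensen's inequality for the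
convex, nonnegative `ν_{2,5}` bounds the last sum by `d ν_{2,5}(Lf(x)/d) ≥ 2 F₀(-Lf(x))`.

`F` is a CD-function because `ν_{2,5}` is strictly convex on `(-∞, 0]` with `ν_{2,5}(0) = 0`,
which makes `F(r)/r` strictly increasing, and `ν_{2,5}(-s) ≥ eˢ/2` for large `s`.
-/

lemma hasDerivAt_Ups (r : ℝ) : HasDerivAt Ups (exp r - 1) r :=
  ((hasDerivAt_exp r).sub (hasDerivAt_id r)).sub_const 1

lemma Ups_add_mul_sub_le (u v : ℝ) : Ups v + (exp v - 1) * (u - v) ≤ Ups u := by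
  have h := add_one_le_exp (u - v)
  have hexp : exp u = exp v * exp (u - v) := by rw [← exp_add, add_sub_cancel]
  unfold Ups
  nlinarith [exp_pos v]

lemma hasDerivAt_nuFn (c b r : ℝ) :
    HasDerivAt (nuFn c b) (c * r * exp r + (c - b) * (exp r - 1) - exp (-r) + 1) r := by
  have hneg : HasDerivAt (fun r => Ups (-r)) (-(exp (-r) - 1)) r := by
    simpa [Function.comp_def] using (hasDerivAt_Ups (-r)).comp r (hasDerivAt_neg r)
  have := ((((hasDerivAt_exp r).sub_const 1).const_mul c).mul (hasDerivAt_id r)).add hneg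
    |>.sub ((hasDerivAt_Ups r).const_mul b)
  exact this.congr_deriv (by simp only [id]; ring)

lemma hasDerivAt_deriv_nuFn (c b r : ℝ) :
    HasDerivAt (deriv (nuFn c b)) ((c * r + 2 * c - b) * exp r + exp (-r)) r := by
  have hneg : HasDerivAt (fun r => exp (-r)) (-exp (-r)) r := by
    simpa [Function.comp_def] using (hasDerivAt_exp (-r)).comp r (hasDerivAt_neg r)
  rw [funext fun r => (hasDerivAt_nuFn c b r).deriv]
  have := (((((hasDerivAt_id r).const_mul c).mul (hasDerivAt_exp r)).add
    (((hasDerivAt_exp r).sub_const 1).const_mul (c - b))).sub hneg).add_const 1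
  exact this.congr_deriv (by simp only [id]; ring)

lemma iter_deriv_two_nuFn (c b : ℝ) :
    deriv^[2] (nuFn c b) = fun r => (c * r + 2 * c - b) * exp r + exp (-r) :=
  funext fun r => (hasDerivAt_deriv_nuFn c b r).deriv

lemma iter_deriv_two_nuFn_two_five_pos {r : ℝ} (hr : r ≠ 0) : 0 < deriv^[2] (nuFn 2 5) r := by
  simp only [iter_deriv_two_nuFn]
  have h := add_one_lt_exp (x := -(2 * r)) (by simpa using hr)
  have hexp : exp (-r) = exp r * exp (-(2 * r)) := by rw [← exp_add]; ring_nf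
  rw [hexp]
  nlinarith [exp_pos r]

lemma convexOn_nuFn_two_five : ConvexOn ℝ univ (nuFn 2 5) := by
  refine convexOn_univ_of_deriv2_nonneg (fun r => (hasDerivAt_nuFn 2 5 r).differentiableAt)
    (fun r => (hasDerivAt_deriv_nuFn 2 5 r).differentiableAt) fun r => ?_
  rcases eq_or_ne r 0 with rfl | hr
  · norm_num [iter_deriv_two_nuFn]
  · exact (iter_deriv_two_nuFn_two_five_pos hr).le

lemma strictConvexOn_nuFn_two_five : StrictConvexOn ℝ (Iic 0) (nuFn 2 5) := by
  refine strictConvexOn_of_deriv2_pos (convex_Iic 0)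
    (fun r _ => (hasDerivAt_nuFn 2 5 r).continuousAt.continuousWithinAt) fun r hr => ?_
  rw [interior_Iic] at hr
  exact iter_deriv_two_nuFn_two_five_pos hr.ne

lemma continuous_nuFn (c b : ℝ) : Continuous (nuFn c b) :=
  continuous_iff_continuousAt.2 fun r => (hasDerivAt_nuFn c b r).continuousAt

lemma nuFn_zero (c b : ℝ) : nuFn c b 0 = 0 := by simp [nuFn, Ups]

lemma nuFn_sub_nuFn (c b b' r : ℝ) : nuFn c b r - nuFn c b' r = (b' - b) * Ups r := by
  simp only [nuFn]; ring

lemma nuFn_two_five_nonneg (r : ℝ) : 0 ≤ nuFn 2 5 r := by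
  have hmin := convexOn_nuFn_two_five.isMinOn_of_rightDeriv_eq_zero (x := 0) (by simp) <| by
    rw [(hasDerivAt_nuFn 2 5 0).hasDerivWithinAt.derivWithin (uniqueDiffWithinAt_Ioi 0)]
    norm_num
  simpa [nuFn_zero] using hmin (mem_univ r)

lemma nuFn_two_five_neg_div_lt {s t : ℝ} (hs : 0 < s) (hst : s < t) :
    nuFn 2 5 (-s) / s < nuFn 2 5 (-t) / t := by
  have h := strictConvexOn_nuFn_two_five.secant_strict_mono (a := 0) (x := -t) (y := -s)
    (by simp) (by simp; linarith) (by simp; linarith) (by linarith) (by linarith) (by linarith)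
  simp only [nuFn_zero, sub_zero] at h
  rwa [div_neg, div_neg, neg_lt_neg_iff] at h

lemma exp_div_two_le_nuFn_two_five_neg {s : ℝ} (hs : 23 ≤ s) : exp s / 2 ≤ nuFn 2 5 (-s) := by
  have hquad := quadratic_le_exp_of_nonneg (x := s) (by linarith)
  have hexp : exp (-s) ≤ 1 := exp_le_one_iff.mpr (by linarith)
  simp only [nuFn, Ups, neg_neg]
  nlinarith [exp_pos (-s)]

lemma card_mul_nuFn_two_five_le_sum {ι : Type*} [Fintype ι] (a : ι → ℝ) :
    Fintype.card ι * nuFn 2 5 ((∑ i, a i) / Fintype.card ι) ≤ ∑ i, nuFn 2 5 (a i) := by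
  rcases isEmpty_or_nonempty ι with hι | hι
  · simp
  have hcard : (0 : ℝ) < Fintype.card ι := by exact_mod_cast Fintype.card_pos
  have h := convexOn_nuFn_two_five.map_sum_le (t := Finset.univ)
    (w := fun _ => (Fintype.card ι : ℝ)⁻¹) (p := a) (fun _ _ => by positivity) (by simp [hcard.ne']) (fun _ _ => mem_univ _)
  simp only [smul_eq_mul, inv_mul_eq_div, ← Finset.sum_div] at h
  rwa [le_div_iff₀' hcard] at h

lemma trivExt_le {F : ℝ → ℝ} {r : ℝ} (h : 0 ≤ F r) : trivExt F r ≤ F r := by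
  unfold trivExt; split_ifs <;> simp [h]

section CDFunction

variable {D : ℝ}

lemma integrableOn_one_div_nuFn_two_five (hD : 0 < D) :
    IntegrableOn (fun r => 1 / (D / 2 * nuFn 2 5 (-(r / D)))) (Ioi (23 * D)) := by
  refine ((exp_neg_integrableOn_Ioi (23 * D) (inv_pos.2 hD)).const_mul (4 / D)).mono' ?_ ?_
  · exact (((continuous_nuFn 2 5).comp (continuous_id.div_const D).neg).const_mul _).measurable
      |>.const_div 1 |>.aestronglyMeasurable
  · rw [ae_restrict_iff' measurableSet_Ioi]
    filter_upwards with r hr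
    have hgrowth := exp_div_two_le_nuFn_two_five_neg (s := r / D) (by
      rw [le_div_iff₀ hD]; exact le_of_lt hr)
    have hpos : 0 < D / 4 * exp (r / D) := by positivity
    rw [one_div, norm_inv, norm_of_nonneg (mul_nonneg (by positivity) (nuFn_two_five_nonneg _))]
    calc (D / 2 * nuFn 2 5 (-(r / D)))⁻¹ ≤ (D / 4 * exp (r / D))⁻¹ :=
          inv_anti₀ hpos (by nlinarith)
      _ = 4 / D * exp (-D⁻¹ * r) := by
          rw [neg_mul, exp_neg, ← div_eq_inv_mul]; field_simp

lemma isCDFunction_nuFn_two_five (hD : 0 < D) :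
    IsCDFunction (fun r => D / 2 * nuFn 2 5 (-(r / D))) := by
  refine ⟨?_, by simp [nuFn_zero], fun r _ => mul_nonneg (by positivity) (nuFn_two_five_nonneg _),
    ?_, 23 * D, by positivity, integrableOn_one_div_nuFn_two_five hD⟩
  · exact ((continuous_nuFn 2 5).comp (continuous_id.div_const D).neg).const_mul _ |>.continuousOn
  · intro r hr t ht hrt
    have h := nuFn_two_five_neg_div_lt (s := r / D) (t := t / D) (div_pos hr hD)
      (div_lt_div_of_pos_right hrt hD)
    simp only [div_div_eq_mul_div] at h
    field_simp at h ⊢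
    linarith

end CDFunction

section Bochner

variable {ι : Type*} [Fintype ι]

lemma sum_sum_eq_zero_of_antisymm {A : ι → ι → ℝ} (h : ∀ i j, A i j = -A j i) :
    ∑ j, ∑ i, A i j = 0 := by
  have hswap : ∑ j, ∑ i, A i j = -∑ j, ∑ i, A i j :=
    calc ∑ j, ∑ i, A i j = ∑ j, ∑ i, A j i := Finset.sum_comm
      _ = ∑ j, ∑ i, -A i j := by simp only [← h]
      _ = -∑ j, ∑ i, A i j := by simp only [Finset.sum_neg_distrib]
  linarith

lemma sum_sum_sub_mul_eq_zero (g a : ι → ℝ) {w : ι → ι → ℝ}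
    (hw : ∀ j, ∑ i, w i j = ∑ i, w j i) :
    ∑ j, ∑ i, (g i - g j) * (w i j - a j - a i) = 0 := by
  have hsplit : ∀ i j, (g i - g j) * (w i j - a j - a i)
      = g i * w i j - g j * w i j - (g i - g j) * (a j + a i) := fun i j => by ring
  have hcross : ∑ j, ∑ i, g i * w i j = ∑ j, ∑ i, g j * w i j := by
    rw [Finset.sum_comm]
    simp only [← Finset.mul_sum, hw]
  simp only [hsplit, Finset.sum_sub_distrib, hcross, sub_self, zero_sub, neg_eq_zero]
  exact sum_sum_eq_zero_of_antisymm fun i j => by ring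

lemma sum_nuFn_le_sum_sum (a : ι → ℝ) {w : ι → ι → ℝ} (hdiag : ∀ i, w i i = 0)
    (hw : ∀ j, ∑ i, w i j = ∑ i, w j i) :
    ∑ i, nuFn 2 1 (a i) ≤
      ∑ j, ∑ i, (Ups (w i j - a j) - Ups (a i) - (exp (a j) - 1) * (w i j - a j - a i)) := by
  set E : ι → ι → ℝ := fun i j => (exp (a i) - exp (a j)) * (w i j - a j - a i)
  have hE : ∑ j, ∑ i, E i j = 0 := sum_sum_sub_mul_eq_zero _ a hw
  have hnonneg : ∀ i j,
      0 ≤ Ups (w i j - a j) - Ups (a i) - (exp (a j) - 1) * (w i j - a j - a i) - E i j := by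
    intro i j
    have := Ups_add_mul_sub_le (w i j - a j) (a i)
    simp only [E]
    linarith
  calc ∑ i, nuFn 2 1 (a i)
      = ∑ j, (Ups (w j j - a j) - Ups (a j) - (exp (a j) - 1) * (w j j - a j - a j) - E j j) := by
        refine Finset.sum_congr rfl fun j _ => ?_
        simp only [E, hdiag, nuFn, zero_sub]
        ring
    _ ≤ ∑ j, ∑ i, (Ups (w i j - a j) - Ups (a i) - (exp (a j) - 1) * (w i j - a j - a i) - E i j) :=
        Finset.sum_le_sum fun j _ =>
          Finset.single_le_sum (fun i _ => hnonneg i j) (Finset.mem_univ j)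
    _ = _ := by simp only [Finset.sum_sub_distrib, hE, sub_zero]

end Bochner

lemma sum_comp_eq_of_range_eq {ι X : Type*} [Fintype ι] {p q : ι → X}
    (hp : Function.Injective p) (hpq : range p = range q) (g : X → ℝ) :
    ∑ i, g (p i) = ∑ i, g (q i) := by
  classical
  have himage : Finset.univ.image q = Finset.univ.image p := by
    apply Finset.coe_injective
    simp [hpq]
  have hq : Set.InjOn q (Finset.univ : Finset ι) := by
    rw [← Finset.card_image_iff, himage, Finset.card_image_of_injective _ hp]
  rw [← Finset.sum_image fun i _ j _ hij => hp hij,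
    ← Finset.sum_image fun i hi j hj hij => hq hi hj hij, himage]

section RegularKernel

variable {X : Type*} {k : X → X → ℝ} {d : ℕ} {x : X} {n : Fin d → X}

def IsUnweightedRegularAt (k : X → X → ℝ) (d : ℕ) (x : X) : Prop :=
  (∀ y, x ≠ y → k x y = 0 ∨ k x y = 1) ∧ (Summable fun y : {y // y ≠ x} => k x y) ∧
    M1fn k x = d

def IsNeighborList (k : X → X → ℝ) (x : X) (n : Fin d → X) : Prop :=
  Function.Injective n ∧ ∀ i, n i ≠ x ∧ k x (n i) = 1

namespace IsUnweightedRegularAt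

lemma eq_zero_of_forall_ne (hx : IsUnweightedRegularAt k d x) (hn : IsNeighborList k x n)
    {y : X} (hyx : y ≠ x) (hy : ∀ i, n i ≠ y) : k x y = 0 := by
  classical
  obtain ⟨h01, hsum, hreg⟩ := hx
  let n' : Fin d → {y // y ≠ x} := fun i => ⟨n i, (hn.2 i).1⟩
  have hn' : Function.Injective n' := fun i j hij => hn.1 (congrArg Subtype.val hij)
  have hy' : (⟨y, hyx⟩ : {y // y ≠ x}) ∉ Finset.univ.image n' := by
    simpa [n', Subtype.ext_iff] using hy
  have hle := hsum.sum_le_tsum (insert ⟨y, hyx⟩ (Finset.univ.image n'))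
    fun z _ => (h01 z (Ne.symm z.2)).elim (·.ge) (fun h => h ▸ zero_le_one)
  rw [Finset.sum_insert hy', Finset.sum_image fun i _ j _ hij => hn' hij] at hle
  simp only [n', (hn.2 _).2, Finset.sum_const, Finset.card_univ, Fintype.card_fin,
    nsmul_eq_mul, mul_one] at hle
  rw [← M1fn, hreg] at hle
  exact (h01 y (Ne.symm hyx)).resolve_right fun h => by linarith

lemma tsum_mul_eq_sum (hx : IsUnweightedRegularAt k d x) (hn : IsNeighborList k x n)
    {h : X → ℝ} (hhx : h x = 0) : ∑' y, k x y * h y = ∑ i, h (n i) := by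
  classical
  rw [tsum_eq_sum (s := Finset.univ.image n), Finset.sum_image fun i _ j _ hij => hn.1 hij]
  · simp only [(hn.2 _).2, one_mul]
  · intro y hy
    rcases eq_or_ne y x with rfl | hyx
    · rw [hhx, mul_zero]
    · rw [hx.eq_zero_of_forall_ne hn hyx fun i hi => hy (by simp [← hi]), zero_mul]

lemma genOp_eq_sum (hx : IsUnweightedRegularAt k d x) (hn : IsNeighborList k x n) (f : X → ℝ) :
    genOp k f x = ∑ i, (f (n i) - f x) :=
  hx.tsum_mul_eq_sum hn (sub_self _)

lemma psiUps_eq_sum (hx : IsUnweightedRegularAt k d x) (hn : IsNeighborList k x n) (f : X → ℝ) :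
    psiUps k f x = ∑ i, Ups (f (n i) - f x) :=
  hx.tsum_mul_eq_sum hn (by simp [Ups])

lemma bUps_eq_sum (hx : IsUnweightedRegularAt k d x) (hn : IsNeighborList k x n) (f g : X → ℝ) :
    bUps k f g x = ∑ i, (exp (f (n i) - f x) - 1) * (g (n i) - g x) := by
  simp only [bUps, mul_assoc]
  exact hx.tsum_mul_eq_sum hn (by simp)

end IsUnweightedRegularAt

end RegularKernel

section RicciFlat

variable {X : Type*} {k : X → X → ℝ} {d : ℕ} {x : X} {n : Fin d → X} {N : Fin d → Fin d → X}

lemma two_mul_psi2Ups_eq_sum (hk : ∀ u, IsUnweightedRegularAt k d u) (hn : IsNeighborList k x n)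
    (hN : ∀ j, IsNeighborList k (n j) (N j)) (f : X → ℝ) :
    2 * psi2Ups k f x = ∑ j, ∑ i, (Ups (f (N j i) - f (n j)) - Ups (f (n i) - f x)
      - (exp (f (n j) - f x) - 1) * (f (N j i) - f (n j) - (f (n i) - f x))) := by
  have hgen := (hk x).genOp_eq_sum hn
  have hpsi := (hk x).psiUps_eq_sum hn f
  rw [psi2Ups, ← mul_assoc, mul_one_div_cancel two_ne_zero, one_mul]
  simp only [(hk x).bUps_eq_sum hn, hgen, hpsi, (hk _).genOp_eq_sum (hN _),
    (hk _).psiUps_eq_sum (hN _), ← Finset.sum_sub_distrib, Finset.mul_sum]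

lemma sum_nuFn_le_two_mul_psi2Ups (hk : ∀ u, IsUnweightedRegularAt k d u)
    (hn : IsNeighborList k x n) (hN : ∀ j, IsNeighborList k (n j) (N j))
    (hflat : ∀ j, range (N j) = range fun i => N i j) (hinv : ∀ i, N i i = x) (f : X → ℝ) :
    ∑ i, nuFn 2 1 (f (n i) - f x) ≤ 2 * psi2Ups k f x := by
  have hw : ∀ j, ∑ i, (f (N j i) - f x) = ∑ i, (f (N i j) - f x) := fun j =>
    sum_comp_eq_of_range_eq (hN j).1 (hflat j) (f · - f x)
  rw [two_mul_psi2Ups_eq_sum hk hn hN]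
  simpa only [sub_sub_sub_cancel_right] using
    sum_nuFn_le_sum_sum (fun i => f (n i) - f x) (w := fun i j => f (N j i) - f x)
      (by simp [hinv]) hw

end RicciFlat

theorem stmt_14 {X : Type*} (k : X → X → ℝ) (d : ℕ) (hd : 1 ≤ d)
    (h01 : ∀ x y : X, x ≠ y → k x y = 0 ∨ k x y = 1)
    (hsum : ∀ x : X, Summable fun y : {y : X // y ≠ x} => k x y)
    (hreg : ∀ x : X, M1fn k x = (d : ℝ))
    (hRicci : ∀ x : X, ∃ η : Fin d → X → X,
      (∀ u : X, (u = x ∨ (u ≠ x ∧ k x u = 1)) →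
        ∀ i : Fin d, η i u ≠ u ∧ k u (η i u) = 1) ∧
      (∀ u : X, (u = x ∨ (u ≠ x ∧ k x u = 1)) →
        ∀ i j : Fin d, i ≠ j → η i u ≠ η j u) ∧
      (∀ i : Fin d,
        Set.range (fun j : Fin d => η j (η i x)) =
          Set.range (fun j : Fin d => η i (η j x))) ∧
      (∀ i : Fin d, η i (η i x) = x)) :
    IsCDFunction (fun r => (d : ℝ) / 2 * nuFn 2 5 (-(r / d)))
    ∧ CDUps k 2 (fun r => (d : ℝ) / 2 * nuFn 2 5 (-(r / d))) := by
  refine ⟨isCDFunction_nuFn_two_five (by positivity), fun x f _ => ?_⟩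
  have hk : ∀ u, IsUnweightedRegularAt k d u := fun u => ⟨h01 u, hsum u, hreg u⟩
  obtain ⟨η, hnbr, hinj, hflat, hinv⟩ := hRicci x
  have hlist : ∀ u, (u = x ∨ (u ≠ x ∧ k x u = 1)) → IsNeighborList k u (η · u) :=
    fun u hu => ⟨fun i j hij => by_contra fun h => hinj u hu i j h hij, hnbr u hu⟩
  have hn := hlist x (Or.inl rfl)
  have hbochner := sum_nuFn_le_two_mul_psi2Ups hk hn (fun j => hlist _ (Or.inr (hn.2 j)))
    hflat hinv f
  have hjensen := card_mul_nuFn_two_five_le_sum fun i => f (η i x) - f x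
  have hF := trivExt_le (F := fun r => (d : ℝ) / 2 * nuFn 2 5 (-(r / d)))
    (r := -genOp k f x) (mul_nonneg (by positivity) (nuFn_two_five_nonneg _))
  rw [Fintype.card_fin] at hjensen
  rw [(hk x).genOp_eq_sum hn, neg_div, neg_neg] at hF
  rw [(hk x).genOp_eq_sum hn, (hk x).psiUps_eq_sum hn]
  have hsplit := Finset.sum_congr rfl fun i (_ : i ∈ Finset.univ) =>
    nuFn_sub_nuFn 2 1 5 (f (η i x) - f x)
  rw [Finset.sum_sub_distrib, ← Finset.mul_sum] at hsplit
  linarith
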